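/- arXiv:math/0601444 — 5 statements merged into one kernel-verified Lean document; each statement's English description precedes it below -/
import Mathlib

section
/- In $U$ the identity $[E_{12},F_{12}]=\dfrac{\omega_1\omega_2-\omega_1'\omega_2'}{r-s}$ holds. -/
noncomputable section

set_option maxHeartbeats 1000000

open MvPolynomial

/-- The field `K = ℚ(r,s)` of rational functions in two indeterminates over `ℚ`. -/
abbrev K : Type := FractionRing (MvPolynomial (Fin 2) ℚ)

/-- The first indeterminate `r`. -/
def r : K := algebraMap (MvPolynomial (Fin 2) ℚ) K (X 0)

/-- The second indeterminate `s`. -/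
def s : K := algebraMap (MvPolynomial (Fin 2) ℚ) K (X 1)

/-- `Δ = r² + rs + s²`. -/
def Δ : K := r ^ 2 + r * s + s ^ 2

/-- Generators of the two-parameter quantum group `U_{r,s}(G₂)` inside an associative unital
`K`-algebra `U`, together with the defining relations (G1)–(G6). -/
structure G2 (U : Type*) [Ring U] [Algebra K U] where
  e1 : U
  e2 : U
  f1 : U
  f2 : U
  ω1 : Uˣ
  ω2 : Uˣ
  ω1' : Uˣ
  ω2' : Uˣ
  /- (G1) : the `ω`'s pairwise commute. -/
  G1_a : ω1 * ω2 = ω2 * ω1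
  G1_b : ω1 * ω1' = ω1' * ω1
  G1_c : ω1 * ω2' = ω2' * ω1
  G1_d : ω2 * ω1' = ω1' * ω2
  G1_e : ω2 * ω2' = ω2' * ω2
  G1_f : ω1' * ω2' = ω2' * ω1'
  /- (G2) -/
  G2_a : (ω1 : U) * e1 * ((ω1⁻¹ : Uˣ) : U) = (r * s⁻¹) • e1
  G2_b : (ω1 : U) * f1 * ((ω1⁻¹ : Uˣ) : U) = (r⁻¹ * s) • f1
  G2_c : (ω1 : U) * e2 * ((ω1⁻¹ : Uˣ) : U) = (s ^ 3) • e2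
  G2_d : (ω1 : U) * f2 * ((ω1⁻¹ : Uˣ) : U) = (s ^ 3)⁻¹ • f2
  G2_e : (ω2 : U) * e1 * ((ω2⁻¹ : Uˣ) : U) = (r ^ 3)⁻¹ • e1
  G2_f : (ω2 : U) * f1 * ((ω2⁻¹ : Uˣ) : U) = (r ^ 3) • f1
  G2_g : (ω2 : U) * e2 * ((ω2⁻¹ : Uˣ) : U) = (r ^ 3 * (s ^ 3)⁻¹) • e2
  G2_h : (ω2 : U) * f2 * ((ω2⁻¹ : Uˣ) : U) = ((r ^ 3)⁻¹ * s ^ 3) • f2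
  /- (G3) -/
  G3_a : (ω1' : U) * e1 * ((ω1'⁻¹ : Uˣ) : U) = (r⁻¹ * s) • e1
  G3_b : (ω1' : U) * f1 * ((ω1'⁻¹ : Uˣ) : U) = (r * s⁻¹) • f1
  G3_c : (ω1' : U) * e2 * ((ω1'⁻¹ : Uˣ) : U) = (r ^ 3) • e2
  G3_d : (ω1' : U) * f2 * ((ω1'⁻¹ : Uˣ) : U) = (r ^ 3)⁻¹ • f2
  G3_e : (ω2' : U) * e1 * ((ω2'⁻¹ : Uˣ) : U) = (s ^ 3)⁻¹ • e1
  G3_f : (ω2' : U) * f1 * ((ω2'⁻¹ : Uˣ) : U) = (s ^ 3) • f1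
  G3_g : (ω2' : U) * e2 * ((ω2'⁻¹ : Uˣ) : U) = ((r ^ 3)⁻¹ * s ^ 3) • e2
  G3_h : (ω2' : U) * f2 * ((ω2'⁻¹ : Uˣ) : U) = (r ^ 3 * (s ^ 3)⁻¹) • f2
  /- (G4) -/
  G4_a : e1 * f1 - f1 * e1 = (r - s)⁻¹ • ((ω1 : U) - (ω1' : U))
  G4_b : e2 * f2 - f2 * e2 = (r ^ 3 - s ^ 3)⁻¹ • ((ω2 : U) - (ω2' : U))
  G4_c : e1 * f2 = f2 * e1
  G4_d : e2 * f1 = f1 * e2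
  /- (G5) -/
  G5_a : e2 ^ 2 * e1 - ((r ^ 3)⁻¹ + (s ^ 3)⁻¹) • (e2 * e1 * e2)
      + ((r * s) ^ 3)⁻¹ • (e1 * e2 ^ 2) = 0
  G5_b : e1 ^ 4 * e2 - ((r + s) * (r ^ 2 + s ^ 2)) • (e1 ^ 3 * e2 * e1)
      + (r * s * (r ^ 2 + s ^ 2) * (r ^ 2 + r * s + s ^ 2)) • (e1 ^ 2 * e2 * e1 ^ 2)
      - ((r * s) ^ 3 * (r + s) * (r ^ 2 + s ^ 2)) • (e1 * e2 * e1 ^ 3)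
      + ((r * s) ^ 6) • (e2 * e1 ^ 4) = 0
  /- (G6) -/
  G6_a : f1 * f2 ^ 2 - ((r ^ 3)⁻¹ + (s ^ 3)⁻¹) • (f2 * f1 * f2)
      + ((r * s) ^ 3)⁻¹ • (f2 ^ 2 * f1) = 0
  G6_b : f2 * f1 ^ 4 - ((r + s) * (r ^ 2 + s ^ 2)) • (f1 * f2 * f1 ^ 3)
      + (r * s * (r ^ 2 + s ^ 2) * (r ^ 2 + r * s + s ^ 2)) • (f1 ^ 2 * f2 * f1 ^ 2)
      - ((r * s) ^ 3 * (r + s) * (r ^ 2 + s ^ 2)) • (f1 ^ 3 * f2 * f1)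
      + ((r * s) ^ 6) • (f1 ^ 4 * f2) = 0


/-- Helper: nonzeroness of polynomial images in `K`. -/
lemma alg_ne_zero {p : MvPolynomial (Fin 2) ℚ} (hp : p ≠ 0) :
    algebraMap (MvPolynomial (Fin 2) ℚ) K p ≠ 0 := by
  simpa using (map_ne_zero_iff _ (IsFractionRing.injective (MvPolynomial (Fin 2) ℚ) K)).mpr hp

lemma r_ne_zero : r ≠ 0 := by
  apply alg_ne_zero
  intro h
  have := congrArg (MvPolynomial.eval (fun i => if i = 0 then (1:ℚ) else 0)) h
  simp at this

lemma s_ne_zero : s ≠ 0 := by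
  apply alg_ne_zero
  intro h
  have := congrArg (MvPolynomial.eval (fun i => if i = 1 then (1:ℚ) else 0)) h
  simp at this

lemma rs_ne_zero : r - s ≠ 0 := by
  have : r - s = algebraMap (MvPolynomial (Fin 2) ℚ) K (X 0 - X 1) := by
    simp [r, s, map_sub]
  rw [this]
  apply alg_ne_zero
  intro h
  have := congrArg (MvPolynomial.eval (fun i => if i = 0 then (1:ℚ) else 0)) h
  simp at this

lemma rs3_ne_zero : r ^ 3 - s ^ 3 ≠ 0 := by
  have : r ^ 3 - s ^ 3 = algebraMap (MvPolynomial (Fin 2) ℚ) K (X 0 ^ 3 - X 1 ^ 3) := by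
    simp [r, s, map_sub, map_pow]
  rw [this]
  apply alg_ne_zero
  intro h
  have := congrArg (MvPolynomial.eval (fun i => if i = 0 then (1:ℚ) else 0)) h
  simp at this

section Swap

variable {U : Type*} [Ring U] [Algebra K U]

lemma conj_swap {x : U} {u : Uˣ} {c : K} (h : (u : U) * x * ((u⁻¹ : Uˣ) : U) = c • x) :
    (u : U) * x = c • (x * (u : U)) := by
  have h2 := congrArg (· * (u : U)) h
  simpa [mul_assoc, smul_mul_assoc] using h2

lemma conj_swap' {x : U} {u : Uˣ} {c : K} (hc : c ≠ 0)
    (h : (u : U) * x * ((u⁻¹ : Uˣ) : U) = c • x) :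
    x * (u : U) = c⁻¹ • ((u : U) * x) := by
  rw [conj_swap h, smul_smul, inv_mul_cancel₀ hc, one_smul]

lemma assoc_rw {U : Type*} [Ring U] {a b t : U} (h : a * b = t) (x : U) :
    a * (b * x) = t * x := by rw [← mul_assoc, h]

end Swap


lemma key {F : Type*} {U : Type*} [Field F] [Ring U] [Algebra F U]
    (a b : F) (ha : a ≠ 0) (hb : b ≠ 0) (hab : a - b ≠ 0) (hab3 : a ^ 3 - b ^ 3 ≠ 0)
    (e1 e2 f1 f2 W1 W2 W1' W2' : U)
    (hef1 : e1 * f1 = f1 * e1 + (a - b)⁻¹ • W1 - (a - b)⁻¹ • W1')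
    (hef2 : e2 * f2 = f2 * e2 + (a ^ 3 - b ^ 3)⁻¹ • W2 - (a ^ 3 - b ^ 3)⁻¹ • W2')
    (hc1 : e1 * f2 = f2 * e1) (hc2 : e2 * f1 = f1 * e2)
    (w1e2 : W1 * e2 = (b ^ 3) • (e2 * W1)) (w1'e2 : W1' * e2 = (a ^ 3) • (e2 * W1'))
    (w2e1 : W2 * e1 = (a ^ 3)⁻¹ • (e1 * W2)) (w2'e1 : W2' * e1 = (b ^ 3)⁻¹ • (e1 * W2'))
    (w2f1 : W2 * f1 = (a ^ 3) • (f1 * W2)) (w2'f1 : W2' * f1 = (b ^ 3) • (f1 * W2'))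
    (w1f2 : W1 * f2 = (b ^ 3)⁻¹ • (f2 * W1)) (w1'f2 : W1' * f2 = (a ^ 3)⁻¹ • (f2 * W1'))
    (c21 : W2 * W1 = W1 * W2) (c2'1 : W2' * W1 = W1 * W2')
    (c21' : W2 * W1' = W1' * W2) (c2'1' : W2' * W1' = W1' * W2') :
    (e1 * e2 - (b ^ 3) • (e2 * e1)) * (f2 * f1 - (a ^ 3) • (f1 * f2))
      - (f2 * f1 - (a ^ 3) • (f1 * f2)) * (e1 * e2 - (b ^ 3) • (e2 * e1))
      = (a - b)⁻¹ • (W1 * W2 - W1' * W2') := by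
  simp only [mul_add, add_mul, mul_sub, sub_mul, smul_add, smul_sub,
    smul_smul, mul_smul_comm, smul_mul_assoc, mul_assoc, hef1, hef2, hc1, hc2,
    w1e2, w1'e2, w2e1, w2'e1, w2f1, w2'f1, w1f2, w1'f2, c21, c2'1, c21', c2'1',
    assoc_rw hef1, assoc_rw hef2, assoc_rw hc1, assoc_rw hc2,
    assoc_rw w1e2, assoc_rw w1'e2, assoc_rw w2e1, assoc_rw w2'e1,
    assoc_rw w2f1, assoc_rw w2'f1, assoc_rw w1f2, assoc_rw w1'f2,
    assoc_rw c21, assoc_rw c2'1, assoc_rw c21', assoc_rw c2'1']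
  have hfact : a ^ 3 - b ^ 3 = (a - b) * (a ^ 2 + a * b + b ^ 2) := by ring
  have hq : a ^ 2 + a * b + b ^ 2 ≠ 0 := by
    intro h
    exact hab3 (by rw [hfact, h, mul_zero])
  have hinv : (a ^ 3 - b ^ 3)⁻¹ = (a - b)⁻¹ * (a ^ 2 + a * b + b ^ 2)⁻¹ := by
    rw [hfact, mul_inv]
  have hD1 : (a ^ 3 * b ^ 8 - a ^ 4 * b ^ 7 * 2 + (a ^ 5 * b ^ 6 - a ^ 6 * b ^ 5 * 2) +
      (a ^ 7 * b ^ 4 * 4 - a ^ 8 * b ^ 3 * 2) + (a ^ 9 * b ^ 2 - a ^ 10 * b * 2) + a ^ 11) ≠ 0 := by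
    have h : (a ^ 3 * b ^ 8 - a ^ 4 * b ^ 7 * 2 + (a ^ 5 * b ^ 6 - a ^ 6 * b ^ 5 * 2) +
        (a ^ 7 * b ^ 4 * 4 - a ^ 8 * b ^ 3 * 2) + (a ^ 9 * b ^ 2 - a ^ 10 * b * 2) + a ^ 11)
        = a ^ 3 * ((a - b) * (a ^ 3 - b ^ 3)) ^ 2 := by ring
    rw [h]
    exact mul_ne_zero (pow_ne_zero _ ha) (pow_ne_zero _ (mul_ne_zero hab hab3))
  have hD2 : (-(b * a ^ 10 * 2) + (b ^ 2 * a ^ 9 - b ^ 3 * a ^ 8 * 2) +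
      (b ^ 4 * a ^ 7 * 4 - b ^ 5 * a ^ 6 * 2) + (b ^ 6 * a ^ 5 - b ^ 7 * a ^ 4 * 2) +
      b ^ 8 * a ^ 3 + a ^ 11) ≠ 0 := by
    have h : (-(b * a ^ 10 * 2) + (b ^ 2 * a ^ 9 - b ^ 3 * a ^ 8 * 2) +
        (b ^ 4 * a ^ 7 * 4 - b ^ 5 * a ^ 6 * 2) + (b ^ 6 * a ^ 5 - b ^ 7 * a ^ 4 * 2) +
        b ^ 8 * a ^ 3 + a ^ 11) = a ^ 3 * ((a - b) * (a ^ 3 - b ^ 3)) ^ 2 := by ring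
    rw [h]
    exact mul_ne_zero (pow_ne_zero _ ha) (pow_ne_zero _ (mul_ne_zero hab hab3))
  have hE1 : (a ^ 3 * b ^ 8 - a ^ 4 * b ^ 7 * 2 + (a ^ 5 * b ^ 6 - a ^ 6 * b ^ 5 * 2) +
      (a ^ 7 * b ^ 4 * 4 - a ^ 8 * b ^ 3 * 2) + (a ^ 9 * b ^ 2 - a ^ 10 * b * 2) + a ^ 11)⁻¹
      = (a ^ 3)⁻¹ * ((a - b) * (a ^ 3 - b ^ 3))⁻¹ ^ 2 := by
    rw [show (a ^ 3 * b ^ 8 - a ^ 4 * b ^ 7 * 2 + (a ^ 5 * b ^ 6 - a ^ 6 * b ^ 5 * 2) +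
      (a ^ 7 * b ^ 4 * 4 - a ^ 8 * b ^ 3 * 2) + (a ^ 9 * b ^ 2 - a ^ 10 * b * 2) + a ^ 11)
      = a ^ 3 * ((a - b) * (a ^ 3 - b ^ 3)) ^ 2 from by ring, mul_inv, inv_pow]
  have hE2 : (-(b * a ^ 10 * 2) + (b ^ 2 * a ^ 9 - b ^ 3 * a ^ 8 * 2) +
      (b ^ 4 * a ^ 7 * 4 - b ^ 5 * a ^ 6 * 2) + (b ^ 6 * a ^ 5 - b ^ 7 * a ^ 4 * 2) +
      b ^ 8 * a ^ 3 + a ^ 11)⁻¹ = (a ^ 3)⁻¹ * ((a - b) * (a ^ 3 - b ^ 3))⁻¹ ^ 2 := by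
    rw [show (-(b * a ^ 10 * 2) + (b ^ 2 * a ^ 9 - b ^ 3 * a ^ 8 * 2) +
      (b ^ 4 * a ^ 7 * 4 - b ^ 5 * a ^ 6 * 2) + (b ^ 6 * a ^ 5 - b ^ 7 * a ^ 4 * 2) +
      b ^ 8 * a ^ 3 + a ^ 11) = a ^ 3 * ((a - b) * (a ^ 3 - b ^ 3)) ^ 2 from by ring,
      mul_inv, inv_pow]
  match_scalars <;> (try simp only [hE1, hE2, hinv]) <;>
    (first
      | ring1
      | (field_simp <;> ring1)
      | (linear_combination (b ^ 3 * ((a - b)⁻¹) ^ 2 * (a ^ 2 + a * b + b ^ 2)⁻¹) *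
            (mul_inv_cancel₀ (pow_ne_zero 3 ha))
          - ((a ^ 2 + a * b + b ^ 2) * (a - b)⁻¹ * (a ^ 2 + a * b + b ^ 2)⁻¹) *
            (mul_inv_cancel₀ hab)
          - (a - b)⁻¹ * (mul_inv_cancel₀ hq))
      | (linear_combination (-(2 * b ^ 3 * ((a - b)⁻¹) ^ 2 * (a ^ 2 + a * b + b ^ 2)⁻¹)) *
            (mul_inv_cancel₀ (pow_ne_zero 3 ha))
          + ((a ^ 2 + a * b + b ^ 2) * (a - b)⁻¹ * (a ^ 2 + a * b + b ^ 2)⁻¹) *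
            (mul_inv_cancel₀ hab)
          + (a - b)⁻¹ * (mul_inv_cancel₀ hq))
      | (linear_combination (-(b ^ 3 * ((a - b)⁻¹) ^ 2 * (a ^ 2 + a * b + b ^ 2)⁻¹)) *
            (mul_inv_cancel₀ (pow_ne_zero 3 ha)))
      | (linear_combination (a ^ 3 * ((a - b)⁻¹) ^ 2 * (a ^ 2 + a * b + b ^ 2)⁻¹) *
            (mul_inv_cancel₀ (pow_ne_zero 3 hb))
          + (b ^ 3 * ((a - b)⁻¹) ^ 2 * (a ^ 2 + a * b + b ^ 2)⁻¹) *
            (mul_inv_cancel₀ (pow_ne_zero 3 ha))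
          + ((a - b)⁻¹ * (a ^ 2 + a * b + b ^ 2) * (a ^ 2 + a * b + b ^ 2)⁻¹) *
            (mul_inv_cancel₀ hab)
          + (a - b)⁻¹ * (mul_inv_cancel₀ hq))
      | (field_simp; linear_combination (a - b) * (mul_inv_cancel₀ hq)))

namespace G2

variable {U : Type*} [Ring U] [Algebra K U]

/-- The quantum root vector `E₁₂ = e₁e₂ - s³e₂e₁`. -/
def E12 (d : G2 U) : U := d.e1 * d.e2 - (s ^ 3) • (d.e2 * d.e1)

/-- The quantum root vector `F₁₂ = f₂f₁ - r³f₁f₂`. -/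
def F12 (d : G2 U) : U := d.f2 * d.f1 - (r ^ 3) • (d.f1 * d.f2)

/-- The quantum root vector `E₁₁₂ = e₁E₁₂ - rs²E₁₂e₁`. -/
def E112 (d : G2 U) : U := d.e1 * d.E12 - (r * s ^ 2) • (d.E12 * d.e1)

/-- The quantum root vector `F₁₁₂ = F₁₂f₁ - r²sf₁F₁₂`. -/
def F112 (d : G2 U) : U := d.F12 * d.f1 - (r ^ 2 * s) • (d.f1 * d.F12)

/-- The quantum root vector `E₁₁₁₂ = e₁E₁₁₂ - r²sE₁₁₂e₁`. -/
def E1112 (d : G2 U) : U := d.e1 * d.E112 - (r ^ 2 * s) • (d.E112 * d.e1)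

/-- The quantum root vector `F₁₁₁₂ = F₁₁₂f₁ - rs²f₁F₁₁₂`. -/
def F1112 (d : G2 U) : U := d.F112 * d.f1 - (r * s ^ 2) • (d.f1 * d.F112)

/-- The quantum root vector `E₂₁ = e₂e₁ - r⁻³e₁e₂`. -/
def E21 (d : G2 U) : U := d.e2 * d.e1 - (r ^ 3)⁻¹ • (d.e1 * d.e2)

end G2

/-- In `U` the identity `[E₁₂, F₁₂] = (ω₁ω₂ - ω₁'ω₂')/(r - s)` holds. -/
theorem stmt0 {U : Type*} [Ring U] [Algebra K U] (d : G2 U) :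
    d.E12 * d.F12 - d.F12 * d.E12
      = (r - s)⁻¹ • ((d.ω1 : U) * (d.ω2 : U) - (d.ω1' : U) * (d.ω2' : U)) := by
  have hr := r_ne_zero
  have hs := s_ne_zero
  have hrs := rs_ne_zero
  have hrs3 := rs3_ne_zero
  have hr3 : (r : K) ^ 3 ≠ 0 := pow_ne_zero _ hr
  have hs3 : (s : K) ^ 3 ≠ 0 := pow_ne_zero _ hs
  -- commutation of e's and f's
  have hef1 : d.e1 * d.f1 = d.f1 * d.e1 + (r - s)⁻¹ • (d.ω1 : U) - (r - s)⁻¹ • (d.ω1' : U) := by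
    have h := d.G4_a
    rw [sub_eq_iff_eq_add] at h
    rw [h, smul_sub]
    abel
  have hef2 : d.e2 * d.f2 = d.f2 * d.e2 + (r ^ 3 - s ^ 3)⁻¹ • (d.ω2 : U)
      - (r ^ 3 - s ^ 3)⁻¹ • (d.ω2' : U) := by
    have h := d.G4_b
    rw [sub_eq_iff_eq_add] at h
    rw [h, smul_sub]
    abel
  -- ω past e's and f's
  have w1e2 : (d.ω1 : U) * d.e2 = (s ^ 3) • (d.e2 * (d.ω1 : U)) := conj_swap d.G2_c
  have w1'e2 : (d.ω1' : U) * d.e2 = (r ^ 3) • (d.e2 * (d.ω1' : U)) := conj_swap d.G3_c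
  have w2e1 : (d.ω2 : U) * d.e1 = (r ^ 3)⁻¹ • (d.e1 * (d.ω2 : U)) := conj_swap d.G2_e
  have w2'e1 : (d.ω2' : U) * d.e1 = (s ^ 3)⁻¹ • (d.e1 * (d.ω2' : U)) := conj_swap d.G3_e
  have w2f1 : (d.ω2 : U) * d.f1 = (r ^ 3) • (d.f1 * (d.ω2 : U)) := conj_swap d.G2_f
  have w2'f1 : (d.ω2' : U) * d.f1 = (s ^ 3) • (d.f1 * (d.ω2' : U)) := conj_swap d.G3_f
  have w1f2 : (d.ω1 : U) * d.f2 = (s ^ 3)⁻¹ • (d.f2 * (d.ω1 : U)) := conj_swap d.G2_d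
  have w1'f2 : (d.ω1' : U) * d.f2 = (r ^ 3)⁻¹ • (d.f2 * (d.ω1' : U)) := conj_swap d.G3_d
  -- ω ordering
  have c21 : (d.ω2 : U) * (d.ω1 : U) = (d.ω1 : U) * (d.ω2 : U) := by
    have := congrArg (Units.val) d.G1_a
    simpa using this.symm
  have c2'1 : (d.ω2' : U) * (d.ω1 : U) = (d.ω1 : U) * (d.ω2' : U) := by
    have := congrArg (Units.val) d.G1_c
    simpa using this.symm
  have c21' : (d.ω2 : U) * (d.ω1' : U) = (d.ω1' : U) * (d.ω2 : U) := by
    have := congrArg (Units.val) d.G1_d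
    simpa using this
  have c2'1' : (d.ω2' : U) * (d.ω1' : U) = (d.ω1' : U) * (d.ω2' : U) := by
    have := congrArg (Units.val) d.G1_f
    simpa using this.symm
  simp only [G2.E12, G2.F12]
  exact key r s hr hs hrs hrs3 d.e1 d.e2 d.f1 d.f2 _ _ _ _ hef1 hef2 d.G4_c d.G4_d
    w1e2 w1'e2 w2e1 w2'e1 w2f1 w2'f1 w1f2 w1'f2 c21 c2'1 c21' c2'1'
end
end

section
/- In $U$ the identity $[\,e_1e_2-r^{3}e_2e_1,\; f_2f_1-s^{3}f_1f_2\,]=\dfrac{\omega_1\omega_2-\omega_1'\omega_2'}{r-s}$ holds. (This is the identity showing that the Lusztig symmetry $\mathcal{T}_2$ preserves the relation $(G4)$ for $i=j=1$.) -/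
noncomputable section

set_option maxHeartbeats 1000000

open MvPolynomial

private lemma key_calc {F V : Type*} [Field F] [Ring V] [Algebra F V]
    (r s : F) (hr : r ≠ 0) (hs : s ≠ 0) (hrs : r - s ≠ 0) (hrs3 : r ^ 3 - s ^ 3 ≠ 0)
    (a b p q x1 x2 y1 y2 : V)
    (hap : a * p = p * a + (r - s)⁻¹ • (x1 - y1))
    (hbq : b * q = q * b + (r ^ 3 - s ^ 3)⁻¹ • (x2 - y2))
    (haq : a * q = q * a) (hbp : b * p = p * b)
    (hx1b : x1 * b = s ^ 3 • (b * x1)) (hy1b : y1 * b = r ^ 3 • (b * y1))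
    (hx2a : x2 * a = (r ^ 3)⁻¹ • (a * x2)) (hy2a : y2 * a = (s ^ 3)⁻¹ • (a * y2))
    (hx1q : x1 * q = (s ^ 3)⁻¹ • (q * x1)) (hy1q : y1 * q = (r ^ 3)⁻¹ • (q * y1))
    (hx2p : x2 * p = r ^ 3 • (p * x2)) (hy2p : y2 * p = s ^ 3 • (p * y2))
    (ho1 : x2 * x1 = x1 * x2) (ho2 : y1 * x1 = x1 * y1) (ho3 : y2 * x1 = x1 * y2)
    (ho4 : x2 * y1 = y1 * x2) (ho5 : y2 * x2 = x2 * y2) (ho6 : y2 * y1 = y1 * y2) :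
    (a * b - (r ^ 3) • (b * a)) * (q * p - (s ^ 3) • (p * q))
      - (q * p - (s ^ 3) • (p * q)) * (a * b - (r ^ 3) • (b * a))
      = (r - s)⁻¹ • (x1 * x2 - y1 * y2) := by
  have gen : ∀ (w x : V) (c : F), w * x = c • (x * w) →
      ∀ y : V, w * (x * y) = c • (x * (w * y)) := by
    intro w x c h y
    rw [← mul_assoc, h, smul_mul_assoc, mul_assoc]
  have gswap : ∀ x y : V, x * y = y * x → ∀ z : V, x * (y * z) = y * (x * z) := by
    intro x y h z
    rw [← mul_assoc, h, mul_assoc]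
  have gcomm : ∀ (x y v : V) (c : F), x * y = y * x + c • v →
      ∀ z : V, x * (y * z) = y * (x * z) + c • (v * z) := by
    intro x y v c h z
    rw [← mul_assoc, h, add_mul, smul_mul_assoc, mul_assoc]
  have hap' := gcomm _ _ _ _ hap
  have hbq' := gcomm _ _ _ _ hbq
  have haq' := gswap _ _ haq
  have hbp' := gswap _ _ hbp
  have hx1b' := gen _ _ _ hx1b
  have hy1b' := gen _ _ _ hy1b
  have hx2a' := gen _ _ _ hx2a
  have hy2a' := gen _ _ _ hy2a
  have hx1q' := gen _ _ _ hx1q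
  have hy1q' := gen _ _ _ hy1q
  have hx2p' := gen _ _ _ hx2p
  have hy2p' := gen _ _ _ hy2p
  have ho1' := gswap _ _ ho1
  have ho2' := gswap _ _ ho2
  have ho3' := gswap _ _ ho3
  have ho4' := gswap _ _ ho4
  have ho5' := gswap _ _ ho5
  have ho6' := gswap _ _ ho6
  simp only [mul_add, add_mul, mul_sub, sub_mul, smul_add, smul_sub, smul_mul_assoc,
    mul_smul_comm, smul_smul, mul_assoc,
    hap, hap', hbq, hbq', haq, haq', hbp, hbp',
    hx1b, hx1b', hy1b, hy1b', hx2a, hx2a', hy2a, hy2a',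
    hx1q, hx1q', hy1q, hy1q', hx2p, hx2p', hy2p, hy2p',
    ho1, ho1', ho2, ho2', ho3, ho3', ho4, ho4', ho5, ho5', ho6, ho6']
  have hD : s ^ 3 * (r - s) ^ 2 * (r ^ 3 - s ^ 3) ^ 2 ≠ 0 :=
    mul_ne_zero (mul_ne_zero (pow_ne_zero 3 hs) (pow_ne_zero 2 hrs)) (pow_ne_zero 2 hrs3)
  have hD' : -(r * s ^ 10 * 2) + (r ^ 2 * s ^ 9 - r ^ 3 * s ^ 8 * 2) + (r ^ 4 * s ^ 7 * 4 - r ^ 5 * s ^ 6 * 2) + (r ^ 6 * s ^ 5 - r ^ 7 * s ^ 4 * 2) + r ^ 8 * s ^ 3 + s ^ 11 ≠ 0 := by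
    intro h
    exact hD (by linear_combination h)
  have hD'' : s ^ 3 * r ^ 8 - s ^ 4 * r ^ 7 * 2 + (s ^ 5 * r ^ 6 - s ^ 6 * r ^ 5 * 2) + (s ^ 7 * r ^ 4 * 4 - s ^ 8 * r ^ 3 * 2) + (s ^ 9 * r ^ 2 - s ^ 10 * r * 2) + s ^ 11 ≠ 0 := by
    intro h
    exact hD (by linear_combination h)
  match_scalars
  all_goals try ring
  all_goals (field_simp [hD', hD'']; try ring)

/-- In `U` the identity
`[e₁e₂ - r³e₂e₁, f₂f₁ - s³f₁f₂] = (ω₁ω₂ - ω₁'ω₂')/(r - s)` holds. -/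
theorem stmt3 {U : Type*} [Ring U] [Algebra K U] (d : G2 U) :
    (d.e1 * d.e2 - (r ^ 3) • (d.e2 * d.e1)) * (d.f2 * d.f1 - (s ^ 3) • (d.f1 * d.f2))
      - (d.f2 * d.f1 - (s ^ 3) • (d.f1 * d.f2)) * (d.e1 * d.e2 - (r ^ 3) • (d.e2 * d.e1))
      = (r - s)⁻¹ • ((d.ω1 : U) * (d.ω2 : U) - (d.ω1' : U) * (d.ω2' : U)) := by
  have hinj : Function.Injective (algebraMap (MvPolynomial (Fin 2) ℚ) K) :=
    IsFractionRing.injective _ _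
  have hXne : (X 0 : MvPolynomial (Fin 2) ℚ) ≠ X 1 := by
    intro h
    have h2 := congrArg (eval (fun i : Fin 2 => if i = 0 then (2 : ℚ) else 1)) h
    norm_num [eval_X] at h2
  have hX3 : (X 0 : MvPolynomial (Fin 2) ℚ) ^ 3 ≠ (X 1) ^ 3 := by
    intro h
    have h2 := congrArg (eval (fun i : Fin 2 => if i = 0 then (2 : ℚ) else 1)) h
    norm_num [eval_X] at h2
  have hr : r ≠ 0 := by
    intro h
    exact MvPolynomial.X_ne_zero 0 (hinj (by simpa [r] using h))
  have hs : s ≠ 0 := by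
    intro h
    exact MvPolynomial.X_ne_zero 1 (hinj (by simpa [s] using h))
  have hrs : r - s ≠ 0 := by
    rw [sub_ne_zero]
    intro h
    exact hXne (hinj (by simpa [r, s] using h))
  have hrs3 : r ^ 3 - s ^ 3 ≠ 0 := by
    rw [sub_ne_zero]
    intro h
    exact hX3 (hinj (by simpa only [r, s, ← map_pow] using h))
  obtain ⟨a, b, p, q, w1, w2, w1', w2', g1a, g1b, g1c, g1d, g1e, g1f,
    g2a, g2b, g2c, g2d, g2e, g2f, g2g, g2h,
    g3a, g3b, g3c, g3d, g3e, g3f, g3g, g3h,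
    g4a, g4b, g4c, g4d, g5a, g5b, g6a, g6b⟩ := d
  have base : ∀ (w : Uˣ) (x : U) (c : K), (w : U) * x * ((w⁻¹ : Uˣ) : U) = c • x →
      (w : U) * x = c • (x * (w : U)) := by
    intro w x c h
    have h2 := congrArg (· * (w : U)) h
    simpa [mul_assoc, Units.inv_mul, mul_one, smul_mul_assoc] using h2
  refine key_calc r s hr hs hrs hrs3 a b p q (w1 : U) (w2 : U) (w1' : U) (w2' : U)
    ?_ ?_ g4c g4d
    (base w1 b (s ^ 3) g2c) (base w1' b (r ^ 3) g3c)
    (base w2 a ((r ^ 3)⁻¹) g2e) (base w2' a ((s ^ 3)⁻¹) g3e)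
    (base w1 q ((s ^ 3)⁻¹) g2d) (base w1' q ((r ^ 3)⁻¹) g3d)
    (base w2 p (r ^ 3) g2f) (base w2' p (s ^ 3) g3f)
    ?_ ?_ ?_ ?_ ?_ ?_
  · rw [← g4a]; abel
  · rw [← g4b]; abel
  · exact_mod_cast congrArg Units.val g1a.symm
  · exact_mod_cast congrArg Units.val g1b.symm
  · exact_mod_cast congrArg Units.val g1c.symm
  · exact_mod_cast congrArg Units.val g1d
  · exact_mod_cast congrArg Units.val g1e.symm
  · exact_mod_cast congrArg Units.val g1f.symm
end
end

section
/- In the two-parameter quantum group $U_{r,s}(G_2)$ (the $K$-algebra presented by the generators and relations (G1)–(G6) below), the identity $E_{1112}E_{112}=r^{3}E_{112}E_{1112}$ holds; consequently this identity holds in $U$ for any elements satisfying (G1)–(G6). -/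
noncomputable section

set_option maxHeartbeats 1000000

open MvPolynomial

set_option maxHeartbeats 4000000 in
theorem aux10 {F : Type*} [Field F] (a b : F) (ha : a ≠ 0) (hb : b ≠ 0)
    (hab : a ^ 2 + b ^ 2 ≠ 0) {U : Type*} [Ring U] [Algebra F U] (e1 e2 : U)
    (hA : (e2 ^ 2 * e1 - ((a ^ 3)⁻¹ + (b ^ 3)⁻¹) • (e2 * e1 * e2) + ((a * b) ^ 3)⁻¹ • (e1 * e2 ^ 2)) = 0)
    (hB : (e1 ^ 4 * e2 - ((a + b) * (a ^ 2 + b ^ 2)) • (e1 ^ 3 * e2 * e1) + (a * b * (a ^ 2 + b ^ 2) * (a ^ 2 + a * b + b ^ 2)) • (e1 ^ 2 * e2 * e1 ^ 2) - ((a * b) ^ 3 * (a + b) * (a ^ 2 + b ^ 2)) • (e1 * e2 * e1 ^ 3) + ((a * b) ^ 6) • (e2 * e1 ^ 4)) = 0) :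
    (e1 * (e1 * (e1 * e2 - b ^ 3 • (e2 * e1)) - (a * b ^ 2) • ((e1 * e2 - b ^ 3 • (e2 * e1)) * e1)) - (a ^ 2 * b) • ((e1 * (e1 * e2 - b ^ 3 • (e2 * e1)) - (a * b ^ 2) • ((e1 * e2 - b ^ 3 • (e2 * e1)) * e1)) * e1)) * (e1 * (e1 * e2 - b ^ 3 • (e2 * e1)) - (a * b ^ 2) • ((e1 * e2 - b ^ 3 • (e2 * e1)) * e1)) = a ^ 3 • ((e1 * (e1 * e2 - b ^ 3 • (e2 * e1)) - (a * b ^ 2) • ((e1 * e2 - b ^ 3 • (e2 * e1)) * e1)) * (e1 * (e1 * (e1 * e2 - b ^ 3 • (e2 * e1)) - (a * b ^ 2) • ((e1 * e2 - b ^ 3 • (e2 * e1)) * e1)) - (a ^ 2 * b) • ((e1 * (e1 * e2 - b ^ 3 • (e2 * e1)) - (a * b ^ 2) • ((e1 * e2 - b ^ 3 • (e2 * e1)) * e1)) * e1))) := by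
  have hA2 : ((a ^ 3 * b ^ 3) • (e2 ^ 2 * e1) - (a ^ 3 + b ^ 3) • (e2 * e1 * e2) + e1 * e2 ^ 2) = 0 := by
    have h : ((a ^ 3 * b ^ 3) • (e2 ^ 2 * e1) - (a ^ 3 + b ^ 3) • (e2 * e1 * e2) + e1 * e2 ^ 2) = (a ^ 3 * b ^ 3) • (e2 ^ 2 * e1 - ((a ^ 3)⁻¹ + (b ^ 3)⁻¹) • (e2 * e1 * e2) + ((a * b) ^ 3)⁻¹ • (e1 * e2 ^ 2)) := by
      match_scalars <;> (field_simp; try ring)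
    rw [h, hA, smul_zero]
  have key : (a ^ 2 * b ^ 2 * (a ^ 2 + b ^ 2)) • ((e1 * (e1 * (e1 * e2 - b ^ 3 • (e2 * e1)) - (a * b ^ 2) • ((e1 * e2 - b ^ 3 • (e2 * e1)) * e1)) - (a ^ 2 * b) • ((e1 * (e1 * e2 - b ^ 3 • (e2 * e1)) - (a * b ^ 2) • ((e1 * e2 - b ^ 3 • (e2 * e1)) * e1)) * e1)) * (e1 * (e1 * e2 - b ^ 3 • (e2 * e1)) - (a * b ^ 2) • ((e1 * e2 - b ^ 3 • (e2 * e1)) * e1)) - a ^ 3 • ((e1 * (e1 * e2 - b ^ 3 • (e2 * e1)) - (a * b ^ 2) • ((e1 * e2 - b ^ 3 • (e2 * e1)) * e1)) * (e1 * (e1 * (e1 * e2 - b ^ 3 • (e2 * e1)) - (a * b ^ 2) • ((e1 * e2 - b ^ 3 • (e2 * e1)) * e1)) - (a ^ 2 * b) • ((e1 * (e1 * e2 - b ^ 3 • (e2 * e1)) - (a * b ^ 2) • ((e1 * e2 - b ^ 3 • (e2 * e1)) * e1)) * e1)))) =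
      (a ^ 10 * b ^ 14) • (((a ^ 3 * b ^ 3) • (e2 ^ 2 * e1) - (a ^ 3 + b ^ 3) • (e2 * e1 * e2) + e1 * e2 ^ 2) * e1 * e1 * e1 * e1)
      + (-((a ^ 6 * b ^ 10 + a ^ 7 * b ^ 9) * (a ^ 2 + b ^ 2))) • (e1 * ((a ^ 3 * b ^ 3) • (e2 ^ 2 * e1) - (a ^ 3 + b ^ 3) • (e2 * e1 * e2) + e1 * e2 ^ 2) * e1 * e1 * e1)
      + (a ^ 3 * b ^ 5 * (a ^ 2 + a * b + b ^ 2) * (a ^ 2 + b ^ 2)) • (e1 * e1 * ((a ^ 3 * b ^ 3) • (e2 ^ 2 * e1) - (a ^ 3 + b ^ 3) • (e2 * e1 * e2) + e1 * e2 ^ 2) * e1 * e1)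
      + (-(a * b ^ 2 * (a + b) * (a ^ 2 + b ^ 2))) • (e1 * e1 * e1 * ((a ^ 3 * b ^ 3) • (e2 ^ 2 * e1) - (a ^ 3 + b ^ 3) • (e2 * e1 * e2) + e1 * e2 ^ 2) * e1)
      + (1 : F) • (e1 * e1 * e1 * e1 * ((a ^ 3 * b ^ 3) • (e2 ^ 2 * e1) - (a ^ 3 + b ^ 3) • (e2 * e1 * e2) + e1 * e2 ^ 2))
      + (-(a * b * (a + b))) • ((e1 ^ 4 * e2 - ((a + b) * (a ^ 2 + b ^ 2)) • (e1 ^ 3 * e2 * e1) + (a * b * (a ^ 2 + b ^ 2) * (a ^ 2 + a * b + b ^ 2)) • (e1 ^ 2 * e2 * e1 ^ 2) - ((a * b) ^ 3 * (a + b) * (a ^ 2 + b ^ 2)) • (e1 * e2 * e1 ^ 3) + ((a * b) ^ 6) • (e2 * e1 ^ 4)) * e1 * e2)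
      + (a * b ^ 2 * (a ^ 3 + a * b ^ 2 + b ^ 3)) • ((e1 ^ 4 * e2 - ((a + b) * (a ^ 2 + b ^ 2)) • (e1 ^ 3 * e2 * e1) + (a * b * (a ^ 2 + b ^ 2) * (a ^ 2 + a * b + b ^ 2)) • (e1 ^ 2 * e2 * e1 ^ 2) - ((a * b) ^ 3 * (a + b) * (a ^ 2 + b ^ 2)) • (e1 * e2 * e1 ^ 3) + ((a * b) ^ 6) • (e2 * e1 ^ 4)) * e2 * e1)
      + (-1 : F) • (e1 * (e1 ^ 4 * e2 - ((a + b) * (a ^ 2 + b ^ 2)) • (e1 ^ 3 * e2 * e1) + (a * b * (a ^ 2 + b ^ 2) * (a ^ 2 + a * b + b ^ 2)) • (e1 ^ 2 * e2 * e1 ^ 2) - ((a * b) ^ 3 * (a + b) * (a ^ 2 + b ^ 2)) • (e1 * e2 * e1 ^ 3) + ((a * b) ^ 6) • (e2 * e1 ^ 4)) * e2)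
      + (-(a ^ 7 * b ^ 11)) • (e2 * (e1 ^ 4 * e2 - ((a + b) * (a ^ 2 + b ^ 2)) • (e1 ^ 3 * e2 * e1) + (a * b * (a ^ 2 + b ^ 2) * (a ^ 2 + a * b + b ^ 2)) • (e1 ^ 2 * e2 * e1 ^ 2) - ((a * b) ^ 3 * (a + b) * (a ^ 2 + b ^ 2)) • (e1 * e2 * e1 ^ 3) + ((a * b) ^ 6) • (e2 * e1 ^ 4)) * e1)
      + (a ^ 3 * b ^ 6 * (a ^ 3 + a ^ 2 * b + b ^ 3)) • (e1 * e2 * (e1 ^ 4 * e2 - ((a + b) * (a ^ 2 + b ^ 2)) • (e1 ^ 3 * e2 * e1) + (a * b * (a ^ 2 + b ^ 2) * (a ^ 2 + a * b + b ^ 2)) • (e1 ^ 2 * e2 * e1 ^ 2) - ((a * b) ^ 3 * (a + b) * (a ^ 2 + b ^ 2)) • (e1 * e2 * e1 ^ 3) + ((a * b) ^ 6) • (e2 * e1 ^ 4)))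
      + (-(a ^ 5 * b ^ 9 * (a + b))) • (e2 * e1 * (e1 ^ 4 * e2 - ((a + b) * (a ^ 2 + b ^ 2)) • (e1 ^ 3 * e2 * e1) + (a * b * (a ^ 2 + b ^ 2) * (a ^ 2 + a * b + b ^ 2)) • (e1 ^ 2 * e2 * e1 ^ 2) - ((a * b) ^ 3 * (a + b) * (a ^ 2 + b ^ 2)) • (e1 * e2 * e1 ^ 3) + ((a * b) ^ 6) • (e2 * e1 ^ 4))) := by
    simp only [smul_sub, smul_add, sub_mul, mul_sub, add_mul, mul_add, smul_mul_assoc,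
      mul_smul_comm, smul_smul, mul_assoc, pow_succ, pow_zero, one_mul]
    match_scalars <;> ring
  rw [hA2, hB] at key
  simp only [mul_zero, zero_mul, smul_zero, add_zero, zero_add, neg_zero, smul_eq_zero] at key
  have hα : (a ^ 2 * b ^ 2 * (a ^ 2 + b ^ 2)) ≠ 0 :=
    mul_ne_zero (mul_ne_zero (pow_ne_zero 2 ha) (pow_ne_zero 2 hb)) hab
  rw [← sub_eq_zero]
  exact key.resolve_left hα

set_option maxHeartbeats 1000000 in
/-- In `U` (for any elements satisfying (G1)–(G6)) the identity
`E₁₁₁₂E₁₁₂ = r³E₁₁₂E₁₁₁₂` holds. -/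
theorem stmt10 {U : Type*} [Ring U] [Algebra K U] (d : G2 U) :
    d.E1112 * d.E112 = (r ^ 3) • (d.E112 * d.E1112) := by
  have hinj := IsFractionRing.injective (MvPolynomial (Fin 2) ℚ) K
  have hr : r ≠ 0 := by
    simpa [r, map_zero] using hinj.ne (MvPolynomial.X_ne_zero (R := ℚ) (n := Fin 2) 0)
  have hs : s ≠ 0 := by
    simpa [s, map_zero] using hinj.ne (MvPolynomial.X_ne_zero (R := ℚ) (n := Fin 2) 1)
  have hp : ((X 0 : MvPolynomial (Fin 2) ℚ) ^ 2 + (X 1) ^ 2) ≠ 0 := by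
    intro h
    have h2 := congrArg (MvPolynomial.eval fun _ => (1 : ℚ)) h
    simp at h2
  have hrs : r ^ 2 + s ^ 2 ≠ 0 := by
    have : r ^ 2 + s ^ 2
        = algebraMap (MvPolynomial (Fin 2) ℚ) K ((X 0) ^ 2 + (X 1) ^ 2) := by
      simp [r, s, map_add, map_pow]
    rw [this]
    simpa [map_zero] using hinj.ne hp
  have := aux10 r s hr hs hrs d.e1 d.e2 d.G5_a d.G5_b
  simpa only [G2.E1112, G2.E112, G2.E12] using this
end
end

section
/- In the two-parameter quantum group $U_{r,s}(G_2)$ (the $K$-algebra presented by the generators and relations (G1)–(G6) below), the identity $(r+s)\bigl(E_{1112}E_{12}-(rs)^{3}E_{12}E_{1112}\bigr)=r(r-s)\Delta\,E_{112}^{2}$ holds; consequently this identity holds in $U$ for any elements satisfying (G1)–(G6). -/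
noncomputable section

set_option maxHeartbeats 1000000

open MvPolynomial

section Aux
variable {F : Type*} [Field F] {V : Type*} [Ring V] [Algebra F V]

/-- The rescaled Serre relation (G5a), with polynomial coefficients. -/
lemma aux_rel_a (p q : F) (hp : p ≠ 0) (hq : q ≠ 0) (x y : V) :
    (p ^ 3 * q ^ 3) • (y ^ 2 * x) - (p ^ 3 + q ^ 3) • (y * x * y) + x * y ^ 2
      = (p ^ 3 * q ^ 3) • (y ^ 2 * x - ((p ^ 3)⁻¹ + (q ^ 3)⁻¹) • (y * x * y)
          + ((p * q) ^ 3)⁻¹ • (x * y ^ 2)) := by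
  rw [smul_add, smul_sub, smul_smul, smul_smul,
    show (p ^ 3 * q ^ 3) * (((p ^ 3)⁻¹ + (q ^ 3)⁻¹)) = p ^ 3 + q ^ 3 by field_simp; ring,
    show (p ^ 3 * q ^ 3) * ((p * q) ^ 3)⁻¹ = 1 by field_simp, one_smul]

set_option maxHeartbeats 16000000 in
/-- The key free-algebra identity, with purely polynomial coefficients. -/
lemma aux_key (p q : F) (x y : V) :
    (p * q * (p + q)) •
      ((x * (x * (x * y - q ^ 3 • (y * x)) - (p * q ^ 2) • ((x * y - q ^ 3 • (y * x)) * x))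
          - (p ^ 2 * q) • ((x * (x * y - q ^ 3 • (y * x))
              - (p * q ^ 2) • ((x * y - q ^ 3 • (y * x)) * x)) * x))
        * (x * y - q ^ 3 • (y * x))
      - ((p * q) ^ 3) • ((x * y - q ^ 3 • (y * x))
        * (x * (x * (x * y - q ^ 3 • (y * x)) - (p * q ^ 2) • ((x * y - q ^ 3 • (y * x)) * x))
          - (p ^ 2 * q) • ((x * (x * y - q ^ 3 • (y * x))
              - (p * q ^ 2) • ((x * y - q ^ 3 • (y * x)) * x)) * x))))
    = (p ^ 2 * q * (p - q) * (p ^ 2 + p * q + q ^ 2)) •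
        ((x * (x * y - q ^ 3 • (y * x)) - (p * q ^ 2) • ((x * y - q ^ 3 • (y * x)) * x)) ^ 2)
      - (p ^ 6 * q ^ 12) • (((p ^ 3 * q ^ 3) • (y ^ 2 * x) - (p ^ 3 + q ^ 3) • (y * x * y)
          + x * y ^ 2) * (x * (x * x)))
      + (p ^ 3 * q ^ 7 * (p ^ 2 + p * q + q ^ 2)) • (x * (((p ^ 3 * q ^ 3) • (y ^ 2 * x)
          - (p ^ 3 + q ^ 3) • (y * x * y) + x * y ^ 2) * (x * x)))
      - (p * q ^ 3 * (p ^ 2 + p * q + q ^ 2)) • (x * (x * (((p ^ 3 * q ^ 3) • (y ^ 2 * x)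
          - (p ^ 3 + q ^ 3) • (y * x * y) + x * y ^ 2) * x)))
      + x * (x * (x * ((p ^ 3 * q ^ 3) • (y ^ 2 * x)
          - (p ^ 3 + q ^ 3) • (y * x * y) + x * y ^ 2)))
      - (x ^ 4 * y - ((p + q) * (p ^ 2 + q ^ 2)) • (x ^ 3 * y * x)
          + (p * q * (p ^ 2 + q ^ 2) * (p ^ 2 + p * q + q ^ 2)) • (x ^ 2 * y * x ^ 2)
          - ((p * q) ^ 3 * (p + q) * (p ^ 2 + q ^ 2)) • (x * y * x ^ 3)
          + ((p * q) ^ 6) • (y * x ^ 4)) * y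
      + (p ^ 3 * q ^ 9) • (y * (x ^ 4 * y
          - ((p + q) * (p ^ 2 + q ^ 2)) • (x ^ 3 * y * x)
          + (p * q * (p ^ 2 + q ^ 2) * (p ^ 2 + p * q + q ^ 2)) • (x ^ 2 * y * x ^ 2)
          - ((p * q) ^ 3 * (p + q) * (p ^ 2 + q ^ 2)) • (x * y * x ^ 3)
          + ((p * q) ^ 6) • (y * x ^ 4))) := by
  simp only [pow_succ, pow_zero, one_mul]
  simp only [mul_sub, sub_mul, mul_add, add_mul, smul_sub, smul_add, smul_smul,
    smul_mul_assoc, mul_smul_comm, mul_assoc]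
  match_scalars <;> ring

end Aux

set_option maxHeartbeats 16000000 in
/-- In `U` (for any elements satisfying (G1)–(G6)) the identity
`(r+s)(E₁₁₁₂E₁₂ - (rs)³E₁₂E₁₁₁₂) = r(r-s)ΔE₁₁₂²` holds. -/
theorem stmt11 {U : Type*} [Ring U] [Algebra K U] (d : G2 U) :
    (r + s) • (d.E1112 * d.E12 - ((r * s) ^ 3) • (d.E12 * d.E1112))
      = (r * (r - s) * Δ) • (d.E112 ^ 2) := by
  have hr : r ≠ 0 := by
    rw [r, Ne, IsFractionRing.to_map_eq_zero_iff]
    exact MvPolynomial.X_ne_zero 0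
  have hs : s ≠ 0 := by
    rw [s, Ne, IsFractionRing.to_map_eq_zero_iff]
    exact MvPolynomial.X_ne_zero 1
  have hA : (r ^ 3 * s ^ 3) • (d.e2 ^ 2 * d.e1) - (r ^ 3 + s ^ 3) • (d.e2 * d.e1 * d.e2)
      + d.e1 * d.e2 ^ 2 = 0 := by
    rw [aux_rel_a r s hr hs d.e1 d.e2, d.G5_a, smul_zero]
  have key := aux_key r s d.e1 d.e2
  rw [hA, d.G5_b] at key
  simp only [zero_mul, mul_zero, smul_zero, sub_zero, add_zero] at key
  have key2 := congrArg (fun z : U => ((r * s)⁻¹ : K) • z) key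
  simp only [smul_smul] at key2
  rw [show (r * s)⁻¹ * (r * s * (r + s)) = r + s by field_simp,
    show (r * s)⁻¹ * (r ^ 2 * s * (r - s) * (r ^ 2 + r * s + s ^ 2))
      = r * (r - s) * (r ^ 2 + r * s + s ^ 2) by field_simp] at key2
  simpa only [G2.E1112, G2.E112, G2.E12, Δ] using key2
end
end

section
/- In $U$ the following three identities hold: $E_{12}e_2=r^{3}e_2E_{12}$, \ $E_{112}e_2=r(r^{2}-s^{2})E_{12}^{2}+(rs)^{3}e_2E_{112}$, \ and $E_{1112}e_2=(rs^{2})^{3}e_2E_{1112}-r(rs-r^{2}+s^{2})E_{112}E_{12}+(rs)^{2}(r^{2}+rs-s^{2})E_{12}E_{112}$. -/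
noncomputable section

set_option maxHeartbeats 1000000

open MvPolynomial

lemma aux_r_ne : (r : K) ≠ 0 := by
  unfold r
  exact fun h => MvPolynomial.X_ne_zero 0
    ((map_eq_zero_iff _ (IsFractionRing.injective (MvPolynomial (Fin 2) ℚ) K)).mp h)

lemma aux_s_ne : (s : K) ≠ 0 := by
  unfold s
  exact fun h => MvPolynomial.X_ne_zero 1
    ((map_eq_zero_iff _ (IsFractionRing.injective (MvPolynomial (Fin 2) ℚ) K)).mp h)

section auxGeneric

variable {F : Type*} [CommRing F] {V : Type*} [Ring V] [Algebra F V]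

/-- Generic rearrangement lemma (proved over an arbitrary commutative ring so that the
`module` tactic applies). -/
lemma aux_rearrange (p q : F) (X Y Z : V)
    (h : (p ^ 3 * q ^ 3) • X - (p ^ 3 + q ^ 3) • Y + Z = 0) :
    Z = (p ^ 3 + q ^ 3) • Y - (p ^ 3 * q ^ 3) • X := by
  rw [← sub_eq_zero, ← h]
  module

/-- The three commutation identities, proved generically from the single Serre-type
relation. -/
lemma aux_main (p q : F) (a b : V)
    (key : ∀ x : V, a * (b * (b * x))
      = (p ^ 3 + q ^ 3) • (b * (a * (b * x))) - (p ^ 3 * q ^ 3) • (b * (b * (a * x))))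
    (key0 : a * (b * b)
      = (p ^ 3 + q ^ 3) • (b * (a * b)) - (p ^ 3 * q ^ 3) • (b * (b * a))) :
    ((a * b - (q ^ 3) • (b * a)) * b
        = (p ^ 3) • (b * (a * b - (q ^ 3) • (b * a))))
    ∧ ((a * (a * b - (q ^ 3) • (b * a))
          - (p * q ^ 2) • ((a * b - (q ^ 3) • (b * a)) * a)) * b
        = (p * (p ^ 2 - q ^ 2)) • ((a * b - (q ^ 3) • (b * a)) * (a * b - (q ^ 3) • (b * a)))
          + ((p * q) ^ 3) • (b * (a * (a * b - (q ^ 3) • (b * a))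
              - (p * q ^ 2) • ((a * b - (q ^ 3) • (b * a)) * a))))
    ∧ ((a * (a * (a * b - (q ^ 3) • (b * a))
            - (p * q ^ 2) • ((a * b - (q ^ 3) • (b * a)) * a))
          - (p ^ 2 * q) • ((a * (a * b - (q ^ 3) • (b * a))
            - (p * q ^ 2) • ((a * b - (q ^ 3) • (b * a)) * a)) * a)) * b
        = ((p * q ^ 2) ^ 3) • (b * (a * (a * (a * b - (q ^ 3) • (b * a))
            - (p * q ^ 2) • ((a * b - (q ^ 3) • (b * a)) * a))
          - (p ^ 2 * q) • ((a * (a * b - (q ^ 3) • (b * a))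
            - (p * q ^ 2) • ((a * b - (q ^ 3) • (b * a)) * a)) * a)))
          - (p * (p * q - p ^ 2 + q ^ 2)) • ((a * (a * b - (q ^ 3) • (b * a))
            - (p * q ^ 2) • ((a * b - (q ^ 3) • (b * a)) * a)) * (a * b - (q ^ 3) • (b * a)))
          + ((p * q) ^ 2 * (p ^ 2 + p * q - q ^ 2)) • ((a * b - (q ^ 3) • (b * a))
            * (a * (a * b - (q ^ 3) • (b * a))
            - (p * q ^ 2) • ((a * b - (q ^ 3) • (b * a)) * a)))) := by
  refine ⟨?_, ?_, ?_⟩ <;>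
  · simp only [mul_sub, sub_mul, mul_add, add_mul, smul_sub, smul_add,
      smul_smul, smul_mul_assoc, mul_smul_comm, mul_assoc, key0, key]
    module

end auxGeneric

namespace G2

variable {U : Type*} [Ring U] [Algebra K U]

/-- The Serre relation (G5_a) solved for `e₁e₂²`. -/
lemma aux_key (d : G2 U) : d.e1 * (d.e2 * d.e2)
    = (r ^ 3 + s ^ 3) • (d.e2 * (d.e1 * d.e2))
      - (r ^ 3 * s ^ 3) • (d.e2 * (d.e2 * d.e1)) := by
  have h := d.G5_a
  have h2 := congrArg (fun x : U => (r ^ 3 * s ^ 3) • x) h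
  simp only [smul_sub, smul_add, smul_smul, smul_zero] at h2
  have c1 : r ^ 3 * s ^ 3 * ((r ^ 3)⁻¹ + (s ^ 3)⁻¹) = r ^ 3 + s ^ 3 := by
    field_simp [aux_r_ne, aux_s_ne]
    ring
  have c2 : r ^ 3 * s ^ 3 * ((r * s) ^ 3)⁻¹ = 1 := by
    rw [mul_pow]
    exact mul_inv_cancel₀ (mul_ne_zero (pow_ne_zero _ aux_r_ne) (pow_ne_zero _ aux_s_ne))
  rw [c1, c2, one_smul] at h2
  simp only [pow_two, mul_assoc] at h2
  exact aux_rearrange r s _ _ _ h2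

/-- Parametrized form of the key relation. -/
lemma aux_keyx (d : G2 U) (x : U) : d.e1 * (d.e2 * (d.e2 * x))
    = (r ^ 3 + s ^ 3) • (d.e2 * (d.e1 * (d.e2 * x)))
      - (r ^ 3 * s ^ 3) • (d.e2 * (d.e2 * (d.e1 * x))) := by
  have h := congrArg (· * x) d.aux_key
  simp only [sub_mul, smul_mul_assoc, mul_assoc] at h
  exact h

end G2

/-- In `U`: `E₁₂e₂ = r³e₂E₁₂`, `E₁₁₂e₂ = r(r²-s²)E₁₂² + (rs)³e₂E₁₁₂` and
`E₁₁₁₂e₂ = (rs²)³e₂E₁₁₁₂ - r(rs-r²+s²)E₁₁₂E₁₂ + (rs)²(r²+rs-s²)E₁₂E₁₁₂`. -/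
theorem stmt12 {U : Type*} [Ring U] [Algebra K U] (d : G2 U) :
    (d.E12 * d.e2 = (r ^ 3) • (d.e2 * d.E12))
    ∧ (d.E112 * d.e2 = (r * (r ^ 2 - s ^ 2)) • (d.E12 ^ 2) + ((r * s) ^ 3) • (d.e2 * d.E112))
    ∧ (d.E1112 * d.e2 = ((r * s ^ 2) ^ 3) • (d.e2 * d.E1112)
        - (r * (r * s - r ^ 2 + s ^ 2)) • (d.E112 * d.E12)
        + ((r * s) ^ 2 * (r ^ 2 + r * s - s ^ 2)) • (d.E12 * d.E112)) := by
  have h := aux_main r s d.e1 d.e2 d.aux_keyx d.aux_key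
  simpa only [G2.E12, G2.E112, G2.E1112, pow_two] using h
end
end
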